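/- arXiv:2212.02781 — 10 statements merged into one kernel-verified Lean document; each statement's English description precedes it below -/
import Mathlib

section
/- Let l, u, t, x be real numbers with l ≤ x ≤ u. Then: (i) if t ≤ l, then min(x, t) = t; (ii) if u ≤ t, then min(x, t) = x; (iii) if l < t and t < u, then ((t − l)·x + (u − t)·l)/(u − l) ≤ min(x, t), and min(x, t) ≤ λ·x + μ for each choice (λ, μ) ∈ {(0, t), (1, 0)}; moreover in case (iii), l ≤ min(x, t) and min(x, t) ≤ λ·u + μ for each such (λ, μ). -/
/-- Soundness of the abstract transformer for the min (clamping) function: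
for `x ∈ [l, u]` and clamp bound `t`,
(i) if `t ≤ l` then `min x t = t`;
(ii) if `u ≤ t` then `min x t = x`;
(iii) if `l < t < u` then `min x t` lies between the lower linear bound
`((t − l)·x + (u − t)·l)/(u − l)` and each upper linear bound `λ·x + μ` for
`(λ, μ) ∈ {(0, t), (1, 0)}`, with concrete bounds `l` and `λ·u + μ`. -/
theorem min_clamp_transformer_sound
    (l u t x : ℝ) (hlx : l ≤ x) (hxu : x ≤ u) :
    (t ≤ l → min x t = t) ∧
    (u ≤ t → min x t = x) ∧
    (l < t → t < u →
      ((t - l) * x + (u - t) * l) / (u - l) ≤ min x t ∧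
      (∀ lam mu : ℝ, ((lam, mu) = ((0 : ℝ), t) ∨ (lam, mu) = ((1 : ℝ), (0 : ℝ))) →
        min x t ≤ lam * x + mu ∧ l ≤ min x t ∧ min x t ≤ lam * u + mu)) := by
  refine ⟨fun h => min_eq_right (h.trans hlx), fun h => min_eq_left (hxu.trans h),
    fun hlt htu => ⟨?_, ?_⟩⟩
  · rw [div_le_iff₀ (by linarith)]
    rcases le_total x t with h | h
    · rw [min_eq_left h]; nlinarith
    · rw [min_eq_right h]; nlinarith
  · rintro lam mu (h | h) <;> injection h with h1 h2 <;> subst h1 <;> subst h2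
    · exact ⟨by simpa using min_le_right x t, le_min hlx hlt.le,
        by simpa using min_le_right x t⟩
    · exact ⟨by simpa using min_le_left x t, le_min hlx hlt.le,
        (min_le_left x t).trans (by linarith)⟩
end

section
/- Let t ≥ 0 and let y, yl, yu, ỹ, δl, δu be real numbers such that 0 ≤ yl, yl ≤ y ≤ yu, ỹ ≤ t, and δl ≤ ỹ − y ≤ δu. Then max(δl, −yu) ≤ clamp(ỹ, 0, t) − y ≤ max(δu, −yl). -/
/-- Case 2-4 of the activation transformer soundness proof: DNN neuron always
activated (`0 ≤ yl ≤ y`), QNN neuron never exceeds the clamp bound (`ỹ ≤ t`),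
with pre-activation difference bounds `δl ≤ ỹ − y ≤ δu`. -/
theorem actTrs_case_2_4
    (t y yl yu yt dl du : ℝ) (ht : 0 ≤ t)
    (hyl0 : 0 ≤ yl) (hyl : yl ≤ y) (hyu : y ≤ yu) (hytt : yt ≤ t)
    (hdl : dl ≤ yt - y) (hdu : yt - y ≤ du) :
    max dl (-yu) ≤ min (max yt 0) t - y ∧
    min (max yt 0) t - y ≤ max du (-yl) := by
  rcases le_total yt 0 with h | h
  · rw [max_eq_right h, min_eq_left ht]
    constructor
    · exact max_le (by linarith) (by linarith)
    · exact le_max_of_le_right (by linarith)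
  · rw [max_eq_left h, min_eq_left hytt]
    exact ⟨max_le hdl (by linarith), le_max_of_le_left hdu⟩
end

section
/- Let t ≥ 0 and let y, yl, yu, ỹ, δl, δu be real numbers such that 0 ≤ yl, yl ≤ y ≤ yu, 0 ≤ ỹ, and δl ≤ ỹ − y ≤ δu. Then min(δl, t − yu) ≤ clamp(ỹ, 0, t) − y ≤ min(δu, t − yl). -/
/-- Case 2-5 of the activation transformer soundness proof: DNN neuron always
activated (`0 ≤ yl ≤ y`), QNN neuron never deactivated (`0 ≤ ỹ`),
with pre-activation difference bounds `δl ≤ ỹ − y ≤ δu`. -/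
theorem actTrs_case_2_5
    (t y yl yu yt dl du : ℝ) (ht : 0 ≤ t)
    (hyl0 : 0 ≤ yl) (hyl : yl ≤ y) (hyu : y ≤ yu) (hyt0 : 0 ≤ yt)
    (hdl : dl ≤ yt - y) (hdu : yt - y ≤ du) :
    min dl (t - yu) ≤ min (max yt 0) t - y ∧
    min (max yt 0) t - y ≤ min du (t - yl) := by
  rw [max_eq_left hyt0]
  constructor
  · rcases le_total yt t with h | h
    · rw [min_eq_left h]; exact le_trans (min_le_left _ _) hdl
    · rw [min_eq_right h]
      exact le_trans (min_le_right _ _) (by linarith)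
  · rcases le_total yt t with h | h
    · rw [min_eq_left h]
      exact le_min (by linarith) (by linarith)
    · rw [min_eq_right h]
      exact le_min (by linarith) (by linarith)
end

section
/- Let t ≥ 0 and let y, yl, yu, ỹ, δl, δu be real numbers such that 0 ≤ yl, yl ≤ y ≤ yu, and δl ≤ ỹ − y ≤ δu. Then max(−yu, min(t − yu, δl)) ≤ clamp(ỹ, 0, t) − y ≤ max(−yl, min(t − yl, δu)). -/
/-- Case 2-6 of the activation transformer soundness proof: DNN neuron always
activated (`0 ≤ yl ≤ y`), no assumption on the QNN neuron's range,
with pre-activation difference bounds `δl ≤ ỹ − y ≤ δu`. -/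
theorem actTrs_case_2_6
    (t y yl yu yt dl du : ℝ) (ht : 0 ≤ t)
    (hyl0 : 0 ≤ yl) (hyl : yl ≤ y) (hyu : y ≤ yu)
    (hdl : dl ≤ yt - y) (hdu : yt - y ≤ du) :
    max (-yu) (min (t - yu) dl) ≤ min (max yt 0) t - y ∧
    min (max yt 0) t - y ≤ max (-yl) (min (t - yl) du) := by
  simp only [max_def, min_def]
  split_ifs <;> constructor <;> linarith
end

section
/- Let t ≥ 0 and let y, ỹ, ỹl, ỹu, δl, δu be real numbers such that 0 ≤ ỹl, ỹl ≤ ỹ ≤ ỹu, ỹu ≤ t, and δl ≤ ỹ − y ≤ δu. Then min(ỹl, δl) ≤ clamp(ỹ, 0, t) − max(y, 0) ≤ min(ỹu, δu). -/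
/-- Case 3-3 of the activation transformer soundness proof: DNN neuron sign
undetermined, QNN neuron neither deactivated nor clamped
(`0 ≤ ỹl ≤ ỹ ≤ ỹu ≤ t`), with difference bounds `δl ≤ ỹ − y ≤ δu`. -/
theorem actTrs_case_3_3
    (t y yt ytl ytu dl du : ℝ) (ht : 0 ≤ t)
    (hytl0 : 0 ≤ ytl) (hytl : ytl ≤ yt) (hytu : yt ≤ ytu) (hytut : ytu ≤ t)
    (hdl : dl ≤ yt - y) (hdu : yt - y ≤ du) :
    min ytl dl ≤ min (max yt 0) t - max y 0 ∧
    min (max yt 0) t - max y 0 ≤ min ytu du := by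
  have h1 : max yt 0 = yt := max_eq_left (le_trans hytl0 hytl)
  have h2 : min yt t = yt := min_eq_left (le_trans hytu hytut)
  rw [h1, h2]
  rcases le_total y 0 with h | h
  · rw [max_eq_right h]
    constructor
    · exact le_trans (min_le_left _ _) (by linarith)
    · exact le_min (by linarith) (by linarith)
  · rw [max_eq_left h]
    constructor
    · exact le_trans (min_le_right _ _) (by linarith)
    · exact le_min (by linarith) (by linarith)
end

section
/- Let t ≥ 0 and let y, yu, ỹ, ỹl, δl, δu be real numbers such that y ≤ yu, 0 ≤ yu, 0 ≤ ỹl, ỹl ≤ ỹ, and δl ≤ ỹ − y ≤ δu. Then min(δl, min(ỹl, t − yu)) ≤ clamp(ỹ, 0, t) − max(y, 0) ≤ min(δu, t). -/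
/-- Case 3-5 of the activation transformer soundness proof: DNN neuron with
upper bound `yu ≥ 0` (sign undetermined), QNN neuron never deactivated
(`0 ≤ ỹl ≤ ỹ`), with difference bounds `δl ≤ ỹ − y ≤ δu`. -/
theorem actTrs_case_3_5
    (t y yu yt ytl dl du : ℝ) (ht : 0 ≤ t)
    (hyu : y ≤ yu) (hyu0 : 0 ≤ yu) (hytl0 : 0 ≤ ytl) (hytl : ytl ≤ yt)
    (hdl : dl ≤ yt - y) (hdu : yt - y ≤ du) :
    min dl (min ytl (t - yu)) ≤ min (max yt 0) t - max y 0 ∧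
    min (max yt 0) t - max y 0 ≤ min du t := by
  constructor <;>
  · simp only [min_def, max_def]
    split_ifs <;> linarith
end

section
/- Let t ≥ 0 and let y, yu, ỹ, δl, δu be real numbers such that y ≤ yu, 0 ≤ yu, and δl ≤ ỹ − y ≤ δu. Then min(t − yu, min(0, max(δl, −yu))) ≤ clamp(ỹ, 0, t) − max(y, 0) ≤ clamp(δu, 0, t). -/
/-- Case 3-6 (the fully general case) of the activation transformer soundness
proof: DNN neuron with upper bound `yu ≥ 0` (sign undetermined), no restriction
on the QNN neuron's range, with difference bounds `δl ≤ ỹ − y ≤ δu`. -/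
theorem actTrs_case_3_6
    (t y yu yt dl du : ℝ) (ht : 0 ≤ t)
    (hyu : y ≤ yu) (hyu0 : 0 ≤ yu)
    (hdl : dl ≤ yt - y) (hdu : yt - y ≤ du) :
    min (t - yu) (min 0 (max dl (-yu))) ≤ min (max yt 0) t - max y 0 ∧
    min (max yt 0) t - max y 0 ≤ min (max du 0) t := by
  constructor
  · rcases le_or_gt t yt with h | h
    · have h1 : min (max yt 0) t = t := min_eq_right (le_max_of_le_left h)
      have h2 : max y 0 ≤ yu := max_le hyu hyu0
      have h3 : min (t - yu) (min 0 (max dl (-yu))) ≤ t - yu := min_le_left _ _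
      rw [h1]; linarith
    · rcases le_total y 0 with hy | hy
      · rw [max_eq_right hy]
        have h1 : (0:ℝ) ≤ min (max yt 0) t := le_min (le_max_right _ _) ht
        have h2 : min (t - yu) (min 0 (max dl (-yu))) ≤ 0 :=
          (min_le_right _ _).trans (min_le_left _ _)
        linarith
      · have hm : min (max yt 0) t = max yt 0 := min_eq_left (max_le h.le ht)
        rw [hm, max_eq_left hy]
        have h1 : max dl (-yu) ≤ max yt 0 - y := by
          apply max_le
          · linarith [le_max_left yt 0]
          · linarith [le_max_right yt 0]
        have h2 : min (t - yu) (min 0 (max dl (-yu))) ≤ max dl (-yu) :=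
          (min_le_right _ _).trans (min_le_right _ _)
        linarith
  · rcases le_total y 0 with hy | hy
    · rw [max_eq_right hy, sub_zero]
      apply le_min
      · exact min_le_of_left_le (max_le_max (by linarith) le_rfl)
      · exact min_le_right _ _
    · rw [max_eq_left hy]
      apply le_min
      · have h1 : min (max yt 0) t ≤ max yt 0 := min_le_left _ _
        have h2 : max yt 0 ≤ max du 0 + y := by
          apply max_le
          · linarith [le_max_left du 0]
          · linarith [le_max_right du 0]
        linarith
      · have := min_le_right (max yt 0) t
        linarith
end

section
/- Let n be a natural number, let w, w̃, x, x̃, xl, xu, dl, du : Fin n → ℝ and b, b̃ ∈ ℝ, and suppose that for every k, xl k ≤ x k ≤ xu k and dl k ≤ x̃ k − x k ≤ du k. Then (∑ₖ min(w̃ k · dl k, w̃ k · du k)) + (∑ₖ min((w̃ k − w k) · xl k, (w̃ k − w k) · xu k)) + (b̃ − b) ≤ (∑ₖ w̃ k · x̃ k + b̃) − (∑ₖ w k · x k + b) ≤ (∑ₖ max(w̃ k · dl k, w̃ k · du k)) + (∑ₖ max((w̃ k − w k) · xl k, (w̃ k − w k) · xu k)) + (b̃ − b). -/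
open Finset

lemma min_mul_le (a l t u : ℝ) (h1 : l ≤ t) (h2 : t ≤ u) :
    min (a * l) (a * u) ≤ a * t ∧ a * t ≤ max (a * l) (a * u) := by
  rcases le_or_gt 0 a with ha | ha
  · constructor
    · exact le_trans (min_le_left _ _) (by nlinarith)
    · exact le_trans (by nlinarith) (le_max_right _ _)
  · constructor
    · exact le_trans (min_le_right _ _) (by nlinarith)
    · exact le_trans (by nlinarith) (le_max_left _ _)

/-- Soundness of the affine transformer (AffTrs) without rounding (`ξ = 0`):
interval bounds on the difference of affine outputs
`(∑ w̃ k · x̃ k + b̃) − (∑ w k · x k + b)` from componentwise activation bounds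
and activation-difference bounds. -/
theorem affTrs_sound_no_rounding
    (n : ℕ) (w wt x xt xl xu dl du : Fin n → ℝ) (b bt : ℝ)
    (hx : ∀ k, xl k ≤ x k ∧ x k ≤ xu k)
    (hd : ∀ k, dl k ≤ xt k - x k ∧ xt k - x k ≤ du k) :
    (∑ k, min (wt k * dl k) (wt k * du k)) +
      (∑ k, min ((wt k - w k) * xl k) ((wt k - w k) * xu k)) + (bt - b) ≤
      (∑ k, wt k * xt k + bt) - (∑ k, w k * x k + b) ∧
    (∑ k, wt k * xt k + bt) - (∑ k, w k * x k + b) ≤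
      (∑ k, max (wt k * dl k) (wt k * du k)) +
        (∑ k, max ((wt k - w k) * xl k) ((wt k - w k) * xu k)) + (bt - b) := by
  have key : (∑ k, wt k * xt k + bt) - (∑ k, w k * x k + b) =
      (∑ k, wt k * (xt k - x k)) + (∑ k, (wt k - w k) * x k) + (bt - b) := by
    simp only [mul_sub, sub_mul, Finset.sum_sub_distrib]
    ring
  rw [key]
  have h1 : ∀ k : Fin n, min (wt k * dl k) (wt k * du k) ≤ wt k * (xt k - x k) ∧
      wt k * (xt k - x k) ≤ max (wt k * dl k) (wt k * du k) :=
    fun k => min_mul_le _ _ _ _ (hd k).1 (hd k).2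
  have h2 : ∀ k : Fin n, min ((wt k - w k) * xl k) ((wt k - w k) * xu k) ≤ (wt k - w k) * x k ∧
      (wt k - w k) * x k ≤ max ((wt k - w k) * xl k) ((wt k - w k) * xu k) :=
    fun k => min_mul_le _ _ _ _ (hx k).1 (hx k).2
  constructor
  · gcongr <;> [exact (h1 _).1; exact (h2 _).1]
  · gcongr <;> [exact (h1 _).2; exact (h2 _).2]
end

section
/- Let n and F be natural numbers, let w, w̃, x, x̃, xl, xu, dl, du : Fin n → ℝ and b, b̃ ∈ ℝ, and suppose that for every k, xl k ≤ x k ≤ xu k and dl k ≤ x̃ k − x k ≤ du k. Let L = (∑ₖ min(w̃ k · dl k, w̃ k · du k)) + (∑ₖ min((w̃ k − w k) · xl k, (w̃ k − w k) · xu k)) + (b̃ − b) and U = (∑ₖ max(w̃ k · dl k, w̃ k · du k)) + (∑ₖ max((w̃ k − w k) · xl k, (w̃ k − w k) · xu k)) + (b̃ − b). Then L − 2^{-(F+1)} ≤ 2^{-F} · (round(2^F · (∑ₖ w̃ k · x̃ k + b̃)) : ℝ) − (∑ₖ w k · x k + b) ≤ U + 2^{-(F+1)}, where round : ℝ → ℤ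 is rounding to the nearest integer. -/
open Finset

/-
The difference of the two pre-activations splits as
`∑ w̃ₖ (x̃ₖ - xₖ) + ∑ (w̃ₖ - wₖ) xₖ + (b̃ - b)`; each summand lies between the products of its
coefficient with the two endpoints of the interval containing its variable factor, which gives
`[L, U]`. Rounding at scale `2^F` moves a real number by at most `2^{-F}/2`, which widens the
interval by `2^{-(F+1)}` on each side.
-/

theorem mul_mem_uIcc_of_mem_Icc {α : Type*} [Field α] [LinearOrder α] [IsStrictOrderedRing α]
    (a : α) {l u v : α} (hu : u ∈ Set.Icc l v) : a * u ∈ Set.uIcc (a * l) (a * v) :=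
  Set.image_const_mul_uIcc a l v ▸ Set.mem_image_of_mem _ (Set.Icc_subset_uIcc hu)

theorem sum_mem_Icc_sum_min_sum_max {ι α : Type*} [AddCommMonoid α] [LinearOrder α]
    [IsOrderedAddMonoid α] (s : Finset ι) {f g h : ι → α}
    (hf : ∀ k ∈ s, f k ∈ Set.uIcc (g k) (h k)) :
    ∑ k ∈ s, f k ∈ Set.Icc (∑ k ∈ s, min (g k) (h k)) (∑ k ∈ s, max (g k) (h k)) := by
  simp only [← Set.Icc_min_max] at hf
  exact ⟨sum_le_sum fun k hk => (hf k hk).1, sum_le_sum fun k hk => (hf k hk).2⟩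

theorem abs_inv_mul_round_mul_sub_le {α : Type*} [Field α] [LinearOrder α]
    [IsStrictOrderedRing α] [FloorRing α] {c : α} (hc : 0 < c) (s : α) :
    |c⁻¹ * round (c * s) - s| ≤ c⁻¹ / 2 := by
  have hscale : c⁻¹ * round (c * s) - s = c⁻¹ * (round (c * s) - c * s) := by
    field_simp
  calc |c⁻¹ * round (c * s) - s| = c⁻¹ * |c * s - round (c * s)| := by
        rw [hscale, abs_mul, abs_of_pos (inv_pos.2 hc), abs_sub_comm]
    _ ≤ c⁻¹ * (1 / 2) := by gcongr; exact abs_sub_round _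
    _ = c⁻¹ / 2 := by ring

theorem abs_two_zpow_neg_mul_round_sub_le (F : ℤ) (s : ℝ) :
    |(2 : ℝ) ^ (-F) * round ((2 : ℝ) ^ F * s) - s| ≤ (2 : ℝ) ^ (-(F + 1)) := by
  have hulp : (2 : ℝ) ^ (-(F + 1)) = ((2 : ℝ) ^ F)⁻¹ / 2 := by
    rw [neg_add, zpow_add₀ two_ne_zero, zpow_neg, zpow_neg_one, div_eq_mul_inv]
  rw [hulp, zpow_neg]
  exact abs_inv_mul_round_mul_sub_le (zpow_pos two_pos F) s

theorem affine_sub_affine_mem_Icc {ι α : Type*} [Fintype ι] [Field α] [LinearOrder α]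
    [IsStrictOrderedRing α] (w wt x xt xl xu dl du : ι → α) (b bt : α)
    (hx : ∀ k, x k ∈ Set.Icc (xl k) (xu k)) (hd : ∀ k, xt k - x k ∈ Set.Icc (dl k) (du k)) :
    (∑ k, wt k * xt k + bt) - (∑ k, w k * x k + b) ∈
      Set.Icc
        ((∑ k, min (wt k * dl k) (wt k * du k)) +
          (∑ k, min ((wt k - w k) * xl k) ((wt k - w k) * xu k)) + (bt - b))
        ((∑ k, max (wt k * dl k) (wt k * du k)) +
          (∑ k, max ((wt k - w k) * xl k) ((wt k - w k) * xu k)) + (bt - b)) := by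
  have hsplit : (∑ k, wt k * xt k + bt) - (∑ k, w k * x k + b) =
      (∑ k, wt k * (xt k - x k)) + (∑ k, (wt k - w k) * x k) + (bt - b) := by
    simp only [mul_sub, sub_mul, sum_sub_distrib]
    ring
  have hdiff := sum_mem_Icc_sum_min_sum_max univ fun k _ => mul_mem_uIcc_of_mem_Icc (wt k) (hd k)
  have hweight := sum_mem_Icc_sum_min_sum_max univ fun k _ =>
    mul_mem_uIcc_of_mem_Icc (wt k - w k) (hx k)
  rw [hsplit]
  exact ⟨by linarith [hdiff.1, hweight.1], by linarith [hdiff.2, hweight.2]⟩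

/-- Soundness of the affine transformer (AffTrs) with rounding error
`ξ = 2^{−F−1}`: the QNN pre-activation is computed by scaling by `2^F`,
rounding to the nearest integer, and scaling back. -/
theorem affTrs_sound_with_rounding
    (n F : ℕ) (w wt x xt xl xu dl du : Fin n → ℝ) (b bt : ℝ)
    (hx : ∀ k, xl k ≤ x k ∧ x k ≤ xu k)
    (hd : ∀ k, dl k ≤ xt k - x k ∧ xt k - x k ≤ du k) :
    ((∑ k, min (wt k * dl k) (wt k * du k)) +
        (∑ k, min ((wt k - w k) * xl k) ((wt k - w k) * xu k)) + (bt - b))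
        - (2 : ℝ) ^ (-((F : ℤ) + 1)) ≤
      (2 : ℝ) ^ (-(F : ℤ)) *
          ((round ((2 : ℝ) ^ (F : ℤ) * (∑ k, wt k * xt k + bt)) : ℤ) : ℝ)
        - (∑ k, w k * x k + b) ∧
    (2 : ℝ) ^ (-(F : ℤ)) *
          ((round ((2 : ℝ) ^ (F : ℤ) * (∑ k, wt k * xt k + bt)) : ℤ) : ℝ)
        - (∑ k, w k * x k + b) ≤
      ((∑ k, max (wt k * dl k) (wt k * du k)) +
        (∑ k, max ((wt k - w k) * xl k) ((wt k - w k) * xu k)) + (bt - b))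
        + (2 : ℝ) ^ (-((F : ℤ) + 1)) := by
  have hexact := affine_sub_affine_mem_Icc w wt x xt xl xu dl du b bt hx hd
  have hround := abs_le.1 (abs_two_zpow_neg_mul_round_sub_le F (∑ k, wt k * xt k + bt))
  exact ⟨by linarith [hexact.1, hround.1], by linarith [hexact.2, hround.2]⟩
end

section
/- Let d, M, η be real numbers with |d| ≤ M. Then there exists a real number v with (v = 0 ∨ v = 1) such that η ≥ 0, η ≥ d, η ≤ M·v, and η ≤ d + M·(1 − v), if and only if η = max(d, 0). -/
/-- Correctness of the big-M constraint set `Θ_g`: the constraints encode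
exactly `η = max(d, 0)`. -/
theorem bigM_encodes_max
    (d M eta : ℝ) (hM : |d| ≤ M) :
    (∃ v : ℝ, (v = 0 ∨ v = 1) ∧
      eta ≥ 0 ∧ eta ≥ d ∧ eta ≤ M * v ∧ eta ≤ d + M * (1 - v)) ↔
    eta = max d 0 := by
  have hd := abs_le.mp hM
  constructor
  · rintro ⟨v, (rfl | rfl), h0, h1, h2, h3⟩
    · simp at h2
      have : eta = 0 := le_antisymm h2 h0
      subst this
      rw [max_eq_right (le_trans h1 h2)]
    · simp at h3
      have : eta = d := le_antisymm h3 h1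
      subst this
      rw [max_eq_left (le_trans h0 h3)]
  · rintro rfl
    rcases le_total d 0 with h | h
    · exact ⟨0, Or.inl rfl, by constructor <;> simp [max_eq_right h, h] <;> linarith [hd.1]⟩
    · exact ⟨1, Or.inr rfl, by simp [max_eq_left h, h, hd.2]⟩
end
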